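/- The Fomin–Kirillov algebra FK(3) over a field k of characteristic ≠ 2,3 has dimension 12 as a k-vector space, with basis {1, a, b, c, ab, bc, ba, ac, aba, abc, bac, abac}. -/

import Mathlib

/-!
The Fomin–Kirillov algebra `FK(3)` over a field `k` of characteristic `≠ 2,3` is the quotient of
the free algebra on three generators `a, b, c` by the two-sided ideal generated by
`a², b², c², ab + bc + ca, ba + ac + cb`.  We state that it has dimension 12 over `k`,
with basis `{1, a, b, c, ab, bc, ba, ac, aba, abc, bac, abac}`.
-/

open FreeAlgebra

/-- The defining relations of the Fomin–Kirillov algebra `FK(3)`. -/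
inductive FKRel (k : Type) [Field k] : FreeAlgebra k (Fin 3) → FreeAlgebra k (Fin 3) → Prop
  | sq_a : FKRel k (ι k (0 : Fin 3) * ι k (0 : Fin 3)) 0
  | sq_b : FKRel k (ι k (1 : Fin 3) * ι k (1 : Fin 3)) 0
  | sq_c : FKRel k (ι k (2 : Fin 3) * ι k (2 : Fin 3)) 0
  | rel1 : FKRel k (ι k (0 : Fin 3) * ι k (1 : Fin 3) + ι k (1 : Fin 3) * ι k (2 : Fin 3) +
      ι k (2 : Fin 3) * ι k (0 : Fin 3)) 0
  | rel2 : FKRel k (ι k (1 : Fin 3) * ι k (0 : Fin 3) + ι k (0 : Fin 3) * ι k (2 : Fin 3) +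
      ι k (2 : Fin 3) * ι k (1 : Fin 3)) 0

/-- The Fomin–Kirillov algebra on three generators. -/
abbrev FK3 (k : Type) [Field k] := RingQuot (FKRel k)

variable (k : Type) [Field k]

/-- The generator `a` of `FK(3)`. -/
noncomputable def FKa : FK3 k := RingQuot.mkAlgHom k (FKRel k) (ι k (0 : Fin 3))
/-- The generator `b` of `FK(3)`. -/
noncomputable def FKb : FK3 k := RingQuot.mkAlgHom k (FKRel k) (ι k (1 : Fin 3))
/-- The generator `c` of `FK(3)`. -/
noncomputable def FKc : FK3 k := RingQuot.mkAlgHom k (FKRel k) (ι k (2 : Fin 3))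

/-- The family `1, a, b, c, ab, bc, ba, ac, aba, abc, bac, abac` in `FK(3)`. -/
noncomputable def fkBasisFam : Fin 12 → FK3 k :=
  ![1, FKa k, FKb k, FKc k,
    FKa k * FKb k, FKb k * FKc k, FKb k * FKa k, FKa k * FKc k,
    FKa k * FKb k * FKa k, FKa k * FKb k * FKc k, FKb k * FKa k * FKc k,
    FKa k * FKb k * FKa k * FKc k]

/-! Rewriting with `a² = b² = c² = 0`, `ca = -ab - bc`, `cb = -ba - ac` and the braid relation
`bab = aba` (a consequence of the defining relations) brings every product of generators to a
ℤ-combination of the twelve words, which therefore span. Conversely, the integer matrices of left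
multiplication by `a, b, c` on these words satisfy the defining relations, so they give a
representation of `FK(3)` on `k¹²` in which the `j`-th word sends `e₀` to `e_j`; hence the words
are independent. -/

theorem mul_mul_eq_of_mul_eq {R : Type*} [Semigroup R] {x y z : R} (h : x * y = z) (w : R) :
    x * (y * w) = z * w := by
  rw [← mul_assoc, h]

theorem Submodule.span_range_eq_top_of_mul_mem {R A ι : Type*} [CommSemiring R] [Semiring A]
    [Algebra R A] {s : Set A} (hs : Algebra.adjoin R s = ⊤) {v : ι → A}
    (h1 : 1 ∈ span R (Set.range v)) (hv : ∀ x ∈ s, ∀ j, x * v j ∈ span R (Set.range v)) :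
    span R (Set.range v) = ⊤ := by
  set M := span R (Set.range v)
  have hmul : ∀ x ∈ Algebra.adjoin R s, ∀ m ∈ M, x * m ∈ M := by
    intro x hx
    induction hx using Algebra.adjoin_induction with
    | mem x hx =>
      have : M ≤ M.comap (LinearMap.mulLeft R x) :=
        span_le.mpr (by rintro _ ⟨j, rfl⟩; exact hv x hx j)
      exact fun m hm => this hm
    | algebraMap r => intro m hm; rw [← Algebra.smul_def]; exact M.smul_mem r hm
    | add x y _ _ hx hy => intro m hm; rw [add_mul]; exact M.add_mem (hx m hm) (hy m hm)
    | mul x y _ _ hx hy => intro m hm; rw [mul_assoc]; exact hx _ (hy m hm)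
  exact eq_top_iff'.mpr fun x => by simpa using hmul x (hs ▸ Algebra.mem_top) 1 h1

def fkWords {R : Type*} [Ring R] (a b c : R) : Fin 12 → R :=
  ![1, a, b, c, a * b, b * c, b * a, a * c, a * b * a, a * b * c, b * a * c, a * b * a * c]

theorem fkWords_map {R S F : Type*} [Ring R] [Ring S] [FunLike F R S] [RingHomClass F R S]
    (f : F) (a b c : R) :
    f ∘ fkWords a b c = fkWords (f a) (f b) (f c) := by
  ext j; fin_cases j <;> simp [fkWords]

/- Column `j` of `fkMatA`, `fkMatB`, `fkMatC` holds the coordinates of `a * wⱼ`, `b * wⱼ`,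
`c * wⱼ` in the words `wᵢ = fkWords a b c i`: the left regular representation. -/
def fkMatA : Matrix (Fin 12) (Fin 12) ℤ :=
  !![0, 0, 0, 0, 0, 0, 0, 0, 0, 0, 0, 0;
    1, 0, 0, 0, 0, 0, 0, 0, 0, 0, 0, 0;
    0, 0, 0, 0, 0, 0, 0, 0, 0, 0, 0, 0;
    0, 0, 0, 0, 0, 0, 0, 0, 0, 0, 0, 0;
    0, 0, 1, 0, 0, 0, 0, 0, 0, 0, 0, 0;
    0, 0, 0, 0, 0, 0, 0, 0, 0, 0, 0, 0;
    0, 0, 0, 0, 0, 0, 0, 0, 0, 0, 0, 0;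
    0, 0, 0, 1, 0, 0, 0, 0, 0, 0, 0, 0;
    0, 0, 0, 0, 0, 0, 1, 0, 0, 0, 0, 0;
    0, 0, 0, 0, 0, 1, 0, 0, 0, 0, 0, 0;
    0, 0, 0, 0, 0, 0, 0, 0, 0, 0, 0, 0;
    0, 0, 0, 0, 0, 0, 0, 0, 0, 0, 1, 0]

def fkMatB : Matrix (Fin 12) (Fin 12) ℤ :=
  !![0, 0, 0, 0, 0, 0, 0, 0, 0, 0, 0, 0;
    0, 0, 0, 0, 0, 0, 0, 0, 0, 0, 0, 0;
    1, 0, 0, 0, 0, 0, 0, 0, 0, 0, 0, 0;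
    0, 0, 0, 0, 0, 0, 0, 0, 0, 0, 0, 0;
    0, 0, 0, 0, 0, 0, 0, 0, 0, 0, 0, 0;
    0, 0, 0, 1, 0, 0, 0, 0, 0, 0, 0, 0;
    0, 1, 0, 0, 0, 0, 0, 0, 0, 0, 0, 0;
    0, 0, 0, 0, 0, 0, 0, 0, 0, 0, 0, 0;
    0, 0, 0, 0, 1, 0, 0, 0, 0, 0, 0, 0;
    0, 0, 0, 0, 0, 0, 0, 0, 0, 0, 0, 0;
    0, 0, 0, 0, 0, 0, 0, 1, 0, 0, 0, 0;
    0, 0, 0, 0, 0, 0, 0, 0, 0, 1, 0, 0]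

def fkMatC : Matrix (Fin 12) (Fin 12) ℤ :=
  !![0, 0, 0, 0, 0, 0, 0, 0, 0, 0, 0, 0;
    0, 0, 0, 0, 0, 0, 0, 0, 0, 0, 0, 0;
    0, 0, 0, 0, 0, 0, 0, 0, 0, 0, 0, 0;
    1, 0, 0, 0, 0, 0, 0, 0, 0, 0, 0, 0;
    0, -1, 0, 0, 0, 0, 0, 0, 0, 0, 0, 0;
    0, -1, 0, 0, 0, 0, 0, 0, 0, 0, 0, 0;
    0, 0, -1, 0, 0, 0, 0, 0, 0, 0, 0, 0;
    0, 0, -1, 0, 0, 0, 0, 0, 0, 0, 0, 0;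
    0, 0, 0, 0, 0, 0, 0, 0, 0, 0, 0, 0;
    0, 0, 0, 0, 0, 0, 1, -1, 0, 0, 0, 0;
    0, 0, 0, 0, 1, -1, 0, 0, 0, 0, 0, 0;
    0, 0, 0, 0, 0, 0, 0, 0, -1, 0, 0, 0]

structure IsFKTriple {R : Type*} [Ring R] (a b c : R) : Prop where
  sq_a : a * a = 0
  sq_b : b * b = 0
  sq_c : c * c = 0
  rel1 : a * b + b * c + c * a = 0
  rel2 : b * a + a * c + c * b = 0

namespace IsFKTriple

variable {R : Type*} [Ring R] {a b c : R}

theorem map {S : Type*} [Ring S] (h : IsFKTriple a b c) (f : R →+* S) :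
    IsFKTriple (f a) (f b) (f c) where
  sq_a := by rw [← map_mul, h.sq_a, map_zero]
  sq_b := by rw [← map_mul, h.sq_b, map_zero]
  sq_c := by rw [← map_mul, h.sq_c, map_zero]
  rel1 := by simp only [← map_mul, ← map_add, h.rel1, map_zero]
  rel2 := by simp only [← map_mul, ← map_add, h.rel2, map_zero]

theorem c_mul_a (h : IsFKTriple a b c) : c * a = -(a * b) - b * c := by
  rw [← sub_eq_zero, ← h.rel1]; abel

theorem c_mul_b (h : IsFKTriple a b c) : c * b = -(b * a) - a * c := by
  rw [← sub_eq_zero, ← h.rel2]; abel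

theorem b_mul_a_mul_b (h : IsFKTriple a b c) : b * (a * b) = a * (b * a) := by
  rw [← sub_eq_zero]
  calc b * (a * b) - a * (b * a)
      = (b * a + a * c + c * b) * b - a * (b * a + a * c + c * b) - c * (b * b) + a * a * c := by
        noncomm_ring
    _ = 0 := by rw [h.rel2, h.sq_a, h.sq_b]; noncomm_ring

theorem c_mul_a_mul (h : IsFKTriple a b c) (w : R) :
    c * (a * w) = -(a * (b * w)) - b * (c * w) := by
  rw [mul_mul_eq_of_mul_eq h.c_mul_a]; noncomm_ring

theorem c_mul_b_mul (h : IsFKTriple a b c) (w : R) :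
    c * (b * w) = -(b * (a * w)) - a * (c * w) := by
  rw [mul_mul_eq_of_mul_eq h.c_mul_b]; noncomm_ring

theorem b_mul_a_mul_b_mul (h : IsFKTriple a b c) (w : R) :
    b * (a * (b * w)) = a * (b * (a * w)) := by
  rw [← mul_assoc a, mul_mul_eq_of_mul_eq h.b_mul_a_mul_b]; simp only [mul_assoc]

theorem gen_mul_fkWords (h : IsFKTriple a b c) (g : Fin 3) (j : Fin 12) :
    ![a, b, c] g * fkWords a b c j =
      ∑ i, ![fkMatA, fkMatB, fkMatC] g i j • fkWords a b c i := by
  -- each rule lowers words in the deglex order with `a < b < c`, so the rewriting terminates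
  fin_cases g <;> fin_cases j <;>
    simp [fkWords, fkMatA, fkMatB, fkMatC, Fin.sum_univ_succ, mul_assoc, mul_sub,
      h.sq_a, h.sq_b, h.sq_c, mul_mul_eq_of_mul_eq h.sq_a, mul_mul_eq_of_mul_eq h.sq_b,
      h.b_mul_a_mul_b, h.b_mul_a_mul_b_mul,
      h.c_mul_a, h.c_mul_a_mul, h.c_mul_b, h.c_mul_b_mul] <;>
    abel

end IsFKTriple

theorem isFKTriple_fkMat : IsFKTriple fkMatA fkMatB fkMatC :=
  ⟨by decide, by decide, by decide, by decide, by decide⟩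

theorem fkWords_fkMat_apply_zero (j i : Fin 12) :
    fkWords fkMatA fkMatB fkMatC j i 0 = (Pi.single j 1 : Fin 12 → ℤ) i := by
  revert j i; decide

namespace FK3

variable {k}

theorem fkBasisFam_eq_fkWords : fkBasisFam k = fkWords (FKa k) (FKb k) (FKc k) := rfl

theorem isFKTriple : IsFKTriple (FKa k) (FKb k) (FKc k) where
  sq_a := by simpa [FKa] using RingQuot.mkAlgHom_rel k (FKRel.sq_a (k := k))
  sq_b := by simpa [FKb] using RingQuot.mkAlgHom_rel k (FKRel.sq_b (k := k))
  sq_c := by simpa [FKc] using RingQuot.mkAlgHom_rel k (FKRel.sq_c (k := k))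
  rel1 := by simpa [FKa, FKb, FKc] using RingQuot.mkAlgHom_rel k (FKRel.rel1 (k := k))
  rel2 := by simpa [FKa, FKb, FKc] using RingQuot.mkAlgHom_rel k (FKRel.rel2 (k := k))

theorem adjoin_range_mk_ι :
    Algebra.adjoin k (Set.range fun g => RingQuot.mkAlgHom k (FKRel k) (ι k g)) = ⊤ := by
  rw [Set.range_comp', Algebra.adjoin_image, FreeAlgebra.adjoin_range_ι, Algebra.map_top,
    AlgHom.range_eq_top]
  exact RingQuot.mkAlgHom_surjective k (FKRel k)

noncomputable def lift {A : Type*} [Ring A] [Algebra k A] {a b c : A} (h : IsFKTriple a b c) :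
    FK3 k →ₐ[k] A :=
  RingQuot.liftAlgHom k ⟨FreeAlgebra.lift k ![a, b, c], by
    rintro x y ⟨⟩ <;> simp [h.sq_a, h.sq_b, h.sq_c, h.rel1, h.rel2]⟩

theorem lift_comp_fkBasisFam {A : Type*} [Ring A] [Algebra k A] {a b c : A}
    (h : IsFKTriple a b c) : lift h ∘ fkBasisFam k = fkWords a b c := by
  have ha : lift h (FKa k) = a := by simp [lift, FKa]
  have hb : lift h (FKb k) = b := by simp [lift, FKb]
  have hc : lift h (FKc k) = c := by simp [lift, FKc]
  rw [fkBasisFam_eq_fkWords, fkWords_map, ha, hb, hc]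

end FK3

theorem span_fkBasisFam : Submodule.span k (Set.range (fkBasisFam k)) = ⊤ := by
  refine Submodule.span_range_eq_top_of_mul_mem FK3.adjoin_range_mk_ι
    (Submodule.subset_span ⟨0, rfl⟩) ?_
  rintro _ ⟨g, rfl⟩ j
  have hg : RingQuot.mkAlgHom k (FKRel k) (ι k g) = ![FKa k, FKb k, FKc k] g := by
    fin_cases g <;> rfl
  dsimp only
  rw [hg, FK3.fkBasisFam_eq_fkWords, FK3.isFKTriple.gen_mul_fkWords]
  exact Submodule.sum_mem _ fun i _ =>
    Submodule.smul_of_tower_mem _ _ (Submodule.subset_span ⟨i, rfl⟩)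

theorem linearIndependent_fkBasisFam : LinearIndependent k (fkBasisFam k) := by
  let ρ := FK3.lift (k := k) (isFKTriple_fkMat.map (Int.castRingHom k).mapMatrix)
  let col₀ : Matrix (Fin 12) (Fin 12) k →ₗ[k] Fin 12 → k :=
    (LinearMap.proj 0).comp (Matrix.transposeLinearEquiv (Fin 12) (Fin 12) k k).toLinearMap
  have hρ : ∀ j, ρ (fkBasisFam k j) =
      (Int.castRingHom k).mapMatrix (fkWords fkMatA fkMatB fkMatC j) :=
    congrFun ((FK3.lift_comp_fkBasisFam _).trans (fkWords_map _ _ _ _).symm)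
  have hcol : col₀.comp ρ.toLinearMap ∘ fkBasisFam k = Pi.basisFun k (Fin 12) := by
    ext j i
    rw [Pi.basisFun_apply]
    change ρ (fkBasisFam k j) i 0 = (Pi.single j (1 : k) : Fin 12 → k) i
    rw [hρ, RingHom.mapMatrix_apply, Matrix.map_apply, fkWords_fkMat_apply_zero]
    by_cases hij : i = j <;> simp [hij]
  exact .of_comp (col₀.comp ρ.toLinearMap) (hcol ▸ (Pi.basisFun k (Fin 12)).linearIndependent)

theorem FK3_finrank_eq_twelve :
    Module.finrank k (FK3 k) = 12 ∧
      ∃ B : Module.Basis (Fin 12) k (FK3 k), ⇑B = fkBasisFam k := by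
  let B := Module.Basis.mk (linearIndependent_fkBasisFam k) (span_fkBasisFam k).ge
  exact ⟨by simp [Module.finrank_eq_card_basis B], B, Module.Basis.coe_mk _ _⟩
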